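/- Soundness of LCR: for every set Γ of L≻-formulas and every L≻-formula φ, if Γ ⊢_LCR φ then Γ ⊨ φ. -/
import Mathlib


namespace LCR

/-- Łukasiewicz negation on ℝ. -/
noncomputable def lneg (a : ℝ) : ℝ := 1 - a

/-- Łukasiewicz implication on ℝ. -/
noncomputable def limp (a b : ℝ) : ℝ := min 1 (1 - a + b)

/-- Łukasiewicz strong conjunction ⊙ on ℝ. -/
noncomputable def lodot (a b : ℝ) : ℝ := max 0 (a + b - 1)

/-- The truth-value set T = {0, 1/(m−1), …, 1}. -/
def Tset (m : ℕ) : Set ℝ := {a | ∃ i : Fin m, a = (i : ℝ) / ((m : ℝ) - 1)}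

/-- The k-th truth value k/(m−1). -/
noncomputable def tv (m : ℕ) (k : Fin m) : ℝ := (k : ℝ) / ((m : ℝ) - 1)

/-- Formulas of the language L≻. -/
inductive Formula : Type where
  | var  : ℕ → Formula
  | neg  : Formula → Formula
  | imp  : Formula → Formula → Formula
  | cond : Formula → Formula → Formula
deriving DecidableEq

namespace Formula
/-- φ ∨ ψ := (φ → ψ) → ψ. -/
def or (φ ψ : Formula) : Formula := .imp (.imp φ ψ) ψ
/-- φ ∧ ψ := ¬(¬φ ∨ ¬ψ). -/
def and (φ ψ : Formula) : Formula := .neg (Formula.or (.neg φ) (.neg ψ))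
/-- φ ↔ ψ := (φ → ψ) ∧ (ψ → φ). -/
def iff (φ ψ : Formula) : Formula := Formula.and (.imp φ ψ) (.imp ψ φ)
end Formula

/-- Purely propositional (¬,→)-formulas. -/
inductive PForm : Type where
  | var : ℕ → PForm
  | neg : PForm → PForm
  | imp : PForm → PForm → PForm

/-- Evaluation of a propositional formula under an assignment. -/
noncomputable def PForm.eval (σ : ℕ → ℝ) : PForm → ℝ
  | .var n => σ n
  | .neg φ => lneg (PForm.eval σ φ)
  | .imp φ ψ => limp (PForm.eval σ φ) (PForm.eval σ ψ)

/-- Tautology of Łukasiewicz m-valued propositional logic. -/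
def PForm.Taut (m : ℕ) (φ : PForm) : Prop :=
  ∀ σ : ℕ → ℝ, (∀ n, σ n ∈ Tset m) → PForm.eval σ φ = 1

/-- Substitution of L≻-formulas for the variables of a propositional formula. -/
def PForm.subst (σ : ℕ → Formula) : PForm → Formula
  | .var n => σ n
  | .neg φ => .neg (PForm.subst σ φ)
  | .imp φ ψ => .imp (PForm.subst σ φ) (PForm.subst σ ψ)

/-- `J` is a family of Rosser–Turquette J-operators: each `J a` is obtained by substitution
into a (¬,→)-definable one-place connective whose value is 1 at inputs equal to `tv m a`
and 0 at all other truth values. -/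
def IsJFamily (m : ℕ) (J : Fin m → Formula → Formula) : Prop :=
  ∃ P : Fin m → PForm,
    (∀ a φ, J a φ = PForm.subst (fun _ => φ) (P a)) ∧
    (∀ (a : Fin m) (σ : ℕ → ℝ), (∀ n, σ n ∈ Tset m) →
      PForm.eval σ (P a) = if σ 0 = tv m a then 1 else 0)

/-- `I` is a family of threshold operators: each `I a` is obtained by substitution into a
(¬,→)-definable one-place connective whose value is 1 at inputs ≥ `tv m a` and 0 otherwise. -/
def IsIFamily (m : ℕ) (I : Fin m → Formula → Formula) : Prop :=
  ∃ P : Fin m → PForm,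
    (∀ a φ, I a φ = PForm.subst (fun _ => φ) (P a)) ∧
    (∀ (a : Fin m) (σ : ℕ → ℝ), (∀ n, σ n ∈ Tset m) →
      PForm.eval σ (P a) = if tv m a ≤ σ 0 then 1 else 0)

/-- The index of aᵢ = (m−i)/(m−1) for i = j+1, i.e. m−1−j. -/
def revIdx {m : ℕ} (j : Fin m) : Fin m := ⟨m - 1 - j.1, by have := j.isLt; omega⟩

/-- Index-level strong conjunction: tv (odotIdx a b) = tv a ⊙ tv b. -/
def odotIdx {m : ℕ} (a b : Fin m) : Fin m :=
  ⟨a.1 + b.1 - (m - 1), by have := a.isLt; have := b.isLt; omega⟩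

/-- Nested implication →ⁿᵢ₌₁(φᵢ, ψ) = φₙ → (φₙ₋₁ → (⋯ → (φ₁ → ψ))), with φᵢ = f (i−1). -/
def nestImp : (n : ℕ) → (Fin n → Formula) → Formula → Formula
  | 0, _, ψ => ψ
  | n+1, f, ψ => .imp (f (Fin.last n)) (nestImp n (fun i => f i.castSucc) ψ)

/-- Theorems of the system LCR (relative to the I-operators used in the rules R_a). -/
inductive Thm (m : ℕ) (I : Fin m → Formula → Formula) : Formula → Prop where
  | taut : ∀ (ψ : PForm) (σ : ℕ → Formula), PForm.Taut m ψ → Thm m I (PForm.subst σ ψ)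
  | a1 : ∀ φ ψ θ : Formula,
      Thm m I (.imp (.cond φ (ψ.and θ)) ((Formula.cond φ ψ).and (.cond φ θ)))
  | a2 : ∀ φ ψ θ : Formula,
      Thm m I (.imp ((Formula.cond φ ψ).and (.cond φ θ)) (.cond φ (ψ.and θ)))
  | a3 : ∀ (φ : Formula) (p : ℕ), Thm m I (.cond φ (.imp (.var p) (.var p)))
  | mp : ∀ φ ψ : Formula, Thm m I (.imp φ ψ) → Thm m I φ → Thm m I ψ
  | rcea : ∀ φ ψ θ : Formula,
      Thm m I (φ.iff ψ) → Thm m I ((Formula.cond φ θ).iff (.cond ψ θ))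
  | rcec : ∀ φ ψ θ : Formula,
      Thm m I (φ.iff ψ) → Thm m I ((Formula.cond θ φ).iff (.cond θ ψ))
  | ra : ∀ (a : Fin m) (φ : Formula) (γ : Fin m → Formula) (δ : Formula),
      (∀ b : Fin m,
        Thm m I (nestImp m (fun j => I (odotIdx (revIdx j) b) (γ j)) (I (odotIdx a b) δ))) →
      Thm m I (nestImp m (fun j => I (revIdx j) (.cond φ (γ j))) (I a (.cond φ δ)))

/-- Γ ⊢_LCR φ : derivability from Γ by theorems of LCR and modus ponens. -/
inductive Deriv (m : ℕ) (I : Fin m → Formula → Formula) (Γ : Set Formula) : Formula → Prop where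
  | thm : ∀ φ, Thm m I φ → Deriv m I Γ φ
  | mem : ∀ φ, φ ∈ Γ → Deriv m I Γ φ
  | mp : ∀ φ ψ, Deriv m I Γ (.imp φ ψ) → Deriv m I Γ φ → Deriv m I Γ ψ

/-- A Kripke LCR model over a set of worlds W. -/
structure Model (m : ℕ) (W : Type) : Type where
  ne : Nonempty W
  R : (Fin m → Set W) → W → W → ℝ
  R_mem : ∀ X x y, R X x y ∈ Tset m
  v : ℕ → W → ℝ
  v_mem : ∀ p x, v p x ∈ Tset m

/-- Valuation of formulas in a Kripke LCR model. -/
noncomputable def Model.val {m : ℕ} {W : Type} (M : Model m W) : Formula → W → ℝ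
  | .var p, x => M.v p x
  | .neg φ, x => lneg (M.val φ x)
  | .imp φ ψ, x => limp (M.val φ x) (M.val ψ x)
  | .cond φ ψ, x =>
      sInf (Set.range fun y : W =>
        limp (M.R (fun i => {z : W | M.val φ z = tv m i}) x y) (M.val ψ y))

/-- Semantic consequence Γ ⊨ φ over all Kripke LCR models. -/
def Entails (m : ℕ) (Γ : Set Formula) (φ : Formula) : Prop :=
  ∀ (W : Type) (M : Model m W) (x : W), (∀ ψ ∈ Γ, M.val ψ x = 1) → M.val φ x = 1

/-- Syntactic consistency. -/
def Consistent (m : ℕ) (I : Fin m → Formula → Formula) (Γ : Set Formula) : Prop :=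
  ¬ ∃ φ : Formula, Deriv m I Γ φ ∧ Deriv m I Γ (.neg φ)

/-- Maximal consistency. -/
def MaxConsistent (m : ℕ) (I : Fin m → Formula → Formula) (Γ : Set Formula) : Prop :=
  Consistent m I Γ ∧ ∀ φ : Formula, Deriv m I Γ φ → φ ∈ Γ

section Sound

variable {m : ℕ}

lemma Tset_eq_range : Tset m = Set.range (tv m) := by
  ext a
  exact ⟨fun ⟨i, h⟩ => ⟨i, h.symm⟩, fun ⟨i, h⟩ => ⟨i, h.symm⟩⟩

lemma Tset_finite : (Tset m).Finite := by
  rw [Tset_eq_range]; exact Set.finite_range _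

lemma m_pos (hm : 2 ≤ m) : (0:ℝ) < (m:ℝ) - 1 := by
  have : (2:ℝ) ≤ (m:ℝ) := by exact_mod_cast hm
  linarith

lemma cast_m_sub_one (hm : 2 ≤ m) : ((m - 1 : ℕ) : ℝ) = (m:ℝ) - 1 := by
  rw [Nat.cast_sub (by omega)]; simp

lemma Tset_nonneg (hm : 2 ≤ m) {a : ℝ} (h : a ∈ Tset m) : 0 ≤ a := by
  obtain ⟨i, rfl⟩ := h
  exact div_nonneg (by positivity) (le_of_lt (m_pos hm))

lemma Tset_le_one (hm : 2 ≤ m) {a : ℝ} (h : a ∈ Tset m) : a ≤ 1 := by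
  obtain ⟨i, rfl⟩ := h
  rw [div_le_one (m_pos hm)]
  have : (i : ℕ) ≤ m - 1 := by have := i.isLt; omega
  calc ((i:ℕ) : ℝ) ≤ ((m - 1 : ℕ) : ℝ) := by exact_mod_cast this
    _ = (m:ℝ) - 1 := cast_m_sub_one hm

lemma tv_nonneg (hm : 2 ≤ m) (k : Fin m) : 0 ≤ tv m k := Tset_nonneg hm ⟨k, rfl⟩

lemma tv_le_one (hm : 2 ≤ m) (k : Fin m) : tv m k ≤ 1 := Tset_le_one hm ⟨k, rfl⟩

lemma mem_Tset_of_nat (k : ℕ) (hk : k < m) {a : ℝ}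
    (ha : a = (k:ℝ)/((m:ℝ)-1)) : a ∈ Tset m := ⟨⟨k, hk⟩, ha⟩

lemma lneg_mem (hm : 2 ≤ m) {a : ℝ} (h : a ∈ Tset m) : lneg a ∈ Tset m := by
  obtain ⟨i, rfl⟩ := h
  have hp := m_pos hm
  have hi : (i : ℕ) ≤ m - 1 := by have := i.isLt; omega
  refine mem_Tset_of_nat (m - 1 - i.1) (by omega) ?_
  rw [Nat.cast_sub hi, cast_m_sub_one hm]
  unfold lneg
  field_simp

lemma limp_mem (hm : 2 ≤ m) {a b : ℝ} (ha : a ∈ Tset m) (hb : b ∈ Tset m) :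
    limp a b ∈ Tset m := by
  obtain ⟨i, rfl⟩ := ha
  obtain ⟨j, rfl⟩ := hb
  have hp := m_pos hm
  have hi : (i : ℕ) ≤ m - 1 := by have := i.isLt; omega
  rcases le_or_gt i.1 j.1 with h | h
  · refine mem_Tset_of_nat (m - 1) (by omega) ?_
    rw [cast_m_sub_one hm]
    unfold limp
    have hij : ((i:ℕ) : ℝ)/((m:ℝ)-1) ≤ ((j:ℕ) : ℝ)/((m:ℝ)-1) := by
      gcongr
    rw [min_eq_left (by linarith)]
    field_simp
  · refine mem_Tset_of_nat (m - 1 - i.1 + j.1) (by omega) ?_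
    have hij : ((j:ℕ) : ℝ)/((m:ℝ)-1) ≤ ((i:ℕ) : ℝ)/((m:ℝ)-1) := by
      gcongr
    unfold limp
    rw [min_eq_right (by linarith)]
    rw [Nat.cast_add, Nat.cast_sub hi, cast_m_sub_one hm]
    field_simp

end Sound
section Sound2

variable {m : ℕ}

lemma limp_le_one (a b : ℝ) : limp a b ≤ 1 := min_le_left _ _

lemma limp_eq_one_iff {a b : ℝ} : limp a b = 1 ↔ a ≤ b := by
  unfold limp
  rw [min_eq_left_iff]
  constructor <;> intro h <;> linarith [h]

lemma limp_nonneg {a b : ℝ} (ha : a ≤ 1) (hb : 0 ≤ b) : 0 ≤ limp a b := by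
  unfold limp
  exact le_min (by norm_num) (by linarith)

lemma val_mem (hm : 2 ≤ m) {W : Type} (M : Model m W) (φ : Formula) (x : W) :
    M.val φ x ∈ Tset m := by
  induction φ generalizing x with
  | var p => exact M.v_mem p x
  | neg φ ih => exact lneg_mem hm (ih x)
  | imp φ ψ ih1 ih2 => exact limp_mem hm (ih1 x) (ih2 x)
  | cond φ ψ ih1 ih2 =>
    show sInf _ ∈ Tset m
    haveI := M.ne
    have hsub : (Set.range fun y : W =>
        limp (M.R (fun i => {z : W | M.val φ z = tv m i}) x y) (M.val ψ y)) ⊆ Tset m := by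
      rintro _ ⟨y, rfl⟩
      exact limp_mem hm (M.R_mem _ x y) (ih2 y)
    have hne : (Set.range fun y : W =>
        limp (M.R (fun i => {z : W | M.val φ z = tv m i}) x y) (M.val ψ y)).Nonempty :=
      Set.range_nonempty _
    exact hsub (hne.csInf_mem (Tset_finite.subset hsub))

lemma val_nonneg (hm : 2 ≤ m) {W : Type} (M : Model m W) (φ : Formula) (x : W) :
    0 ≤ M.val φ x := Tset_nonneg hm (val_mem hm M φ x)

lemma val_le_one (hm : 2 ≤ m) {W : Type} (M : Model m W) (φ : Formula) (x : W) :
    M.val φ x ≤ 1 := Tset_le_one hm (val_mem hm M φ x)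

lemma subst_val {W : Type} (M : Model m W) (σ : ℕ → Formula) (ψ : PForm) (x : W) :
    M.val (PForm.subst σ ψ) x = PForm.eval (fun n => M.val (σ n) x) ψ := by
  induction ψ with
  | var n => rfl
  | neg φ ih => simp only [PForm.subst, PForm.eval, Model.val, ih]
  | imp φ ψ ih1 ih2 => simp only [PForm.subst, PForm.eval, Model.val, ih1, ih2]

lemma lneg_limp_min {a b : ℝ} (h0a : 0 ≤ a) (ha : a ≤ 1) (h0b : 0 ≤ b) (hb : b ≤ 1) :
    lneg (limp (limp (lneg a) (lneg b)) (lneg b)) = min a b := by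
  unfold lneg limp
  rcases le_total a b with h | h
  · rw [min_eq_right (by linarith : (1 - (1-a) + (1-b)) ≤ 1)]
    rw [min_eq_right (by linarith : 1 - (1 - (1-a) + (1-b)) + (1-b) ≤ 1)]
    rw [min_eq_left h]
    ring
  · rw [min_eq_left (by linarith : 1 ≤ (1 - (1-a) + (1-b)))]
    rw [min_eq_right (by linarith : 1 - 1 + (1-b) ≤ 1)]
    rw [min_eq_right h]
    ring

lemma val_and (hm : 2 ≤ m) {W : Type} (M : Model m W) (φ ψ : Formula) (x : W) :
    M.val (φ.and ψ) x = min (M.val φ x) (M.val ψ x) := by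
  have := val_nonneg hm M φ x
  have := val_le_one hm M φ x
  have := val_nonneg hm M ψ x
  have := val_le_one hm M ψ x
  show lneg (limp (limp (lneg (M.val φ x)) (lneg (M.val ψ x))) (lneg (M.val ψ x))) = _
  exact lneg_limp_min ‹_› ‹_› ‹_› ‹_›

lemma val_imp {W : Type} (M : Model m W) (φ ψ : Formula) (x : W) :
    M.val (.imp φ ψ) x = limp (M.val φ x) (M.val ψ x) := rfl

lemma val_iff_one (hm : 2 ≤ m) {W : Type} (M : Model m W) (φ ψ : Formula) (x : W) :
    M.val (φ.iff ψ) x = 1 ↔ M.val φ x = M.val ψ x := by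
  rw [Formula.iff, val_and hm, val_imp, val_imp]
  constructor
  · intro h
    have h1 : limp (M.val φ x) (M.val ψ x) = 1 :=
      le_antisymm (limp_le_one _ _) (h ▸ min_le_left _ _)
    have h2 : limp (M.val ψ x) (M.val φ x) = 1 :=
      le_antisymm (limp_le_one _ _) (h ▸ min_le_right _ _)
    exact le_antisymm (limp_eq_one_iff.mp h1) (limp_eq_one_iff.mp h2)
  · intro h
    rw [h, limp_eq_one_iff.mpr le_rfl, min_self]

end Sound2
section Sound3

variable {m : ℕ}

lemma limp_min (r b c : ℝ) : limp r (min b c) = min (limp r b) (limp r c) := by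
  unfold limp
  rcases le_total b c with h | h
  · rw [min_eq_left h, min_eq_left (min_le_min le_rfl (by linarith))]
  · rw [min_eq_right h, min_eq_right (min_le_min le_rfl (by linarith))]

lemma sInf_range_min {W : Type} [Nonempty W] (f g : W → ℝ)
    (hf : ∀ y, 0 ≤ f y) (hg : ∀ y, 0 ≤ g y) :
    sInf (Set.range fun y => min (f y) (g y)) = min (sInf (Set.range f)) (sInf (Set.range g)) := by
  have bddf : BddBelow (Set.range f) := ⟨0, by rintro _ ⟨y, rfl⟩; exact hf y⟩
  have bddg : BddBelow (Set.range g) := ⟨0, by rintro _ ⟨y, rfl⟩; exact hg y⟩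
  have bddm : BddBelow (Set.range fun y => min (f y) (g y)) :=
    ⟨0, by rintro _ ⟨y, rfl⟩; exact le_min (hf y) (hg y)⟩
  apply le_antisymm
  · apply le_min
    · apply le_csInf (Set.range_nonempty f)
      rintro _ ⟨y, rfl⟩
      exact le_trans (csInf_le bddm ⟨y, rfl⟩) (min_le_left _ _)
    · apply le_csInf (Set.range_nonempty g)
      rintro _ ⟨y, rfl⟩
      exact le_trans (csInf_le bddm ⟨y, rfl⟩) (min_le_right _ _)
  · apply le_csInf (Set.range_nonempty _)
    rintro _ ⟨y, rfl⟩
    exact le_min (min_le_of_left_le (csInf_le bddf ⟨y, rfl⟩))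
      (min_le_of_right_le (csInf_le bddg ⟨y, rfl⟩))

lemma val_cond (hm : 2 ≤ m) {W : Type} (M : Model m W) (φ ψ : Formula) (x : W) :
    M.val (.cond φ ψ) x = sInf (Set.range fun y : W =>
      limp (M.R (fun i => {z : W | M.val φ z = tv m i}) x y) (M.val ψ y)) := rfl

lemma cond_and (hm : 2 ≤ m) {W : Type} (M : Model m W) (φ ψ θ : Formula) (x : W) :
    M.val (.cond φ (ψ.and θ)) x
      = min (M.val (.cond φ ψ) x) (M.val (.cond φ θ) x) := by
  haveI := M.ne
  rw [val_cond hm, val_cond hm, val_cond hm]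
  set r : W → ℝ := fun y => M.R (fun i => {z : W | M.val φ z = tv m i}) x y with hr
  have h1 : (fun y => limp (r y) (M.val (ψ.and θ) y))
      = fun y => min (limp (r y) (M.val ψ y)) (limp (r y) (M.val θ y)) := by
    funext y
    rw [val_and hm, limp_min]
  rw [h1]
  exact sInf_range_min _ _
    (fun y => limp_nonneg (Tset_le_one hm (M.R_mem _ x y)) (val_nonneg hm M ψ y))
    (fun y => limp_nonneg (Tset_le_one hm (M.R_mem _ x y)) (val_nonneg hm M θ y))

lemma tv_odot (hm : 2 ≤ m) (a b : Fin m) :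
    tv m (odotIdx a b) = max 0 (tv m a + tv m b - 1) := by
  have hp := m_pos hm
  have key : ((a.1 + b.1 - (m-1) : ℕ) : ℝ) = max 0 ((a.1:ℝ) + (b.1:ℝ) - ((m:ℝ)-1)) := by
    rcases le_or_gt (m-1) (a.1+b.1) with h | h
    · rw [max_eq_right (by
        have : ((m-1:ℕ):ℝ) ≤ ((a.1+b.1 : ℕ):ℝ) := by exact_mod_cast h
        rw [cast_m_sub_one hm] at this
        push_cast at this
        linarith)]
      rw [Nat.cast_sub h, cast_m_sub_one hm]
      push_cast
      ring
    · rw [max_eq_left (by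
        have : ((a.1+b.1 : ℕ):ℝ) ≤ ((m-1:ℕ):ℝ) := by exact_mod_cast h.le
        rw [cast_m_sub_one hm] at this
        push_cast at this
        linarith)]
      rw [Nat.sub_eq_zero_of_le h.le]
      simp
  show ((a.1 + b.1 - (m-1) : ℕ) : ℝ) / ((m:ℝ)-1) = _
  rw [key]
  rw [← max_div_div_right hp.le]
  rw [zero_div]
  congr 1
  unfold tv
  field_simp

lemma I_val (hm : 2 ≤ m) {I : Fin m → Formula → Formula} (hI : IsIFamily m I)
    {W : Type} (M : Model m W) (a : Fin m) (χ : Formula) (x : W) :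
    M.val (I a χ) x = if tv m a ≤ M.val χ x then 1 else 0 := by
  obtain ⟨P, hP1, hP2⟩ := hI
  rw [hP1, subst_val]
  exact hP2 a _ (fun n => val_mem hm M χ x)

end Sound3
section Sound4

variable {m : ℕ}

lemma nestImp_val (hm : 2 ≤ m) {W : Type} (M : Model m W) (x : W) :
    ∀ (n : ℕ) (f : Fin n → Formula) (ψ : Formula),
    (∀ j, M.val (f j) x = 1 ∨ M.val (f j) x = 0) →
    (M.val (nestImp n f ψ) x = 1 ↔ ((∀ j, M.val (f j) x = 1) → M.val ψ x = 1)) := by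
  intro n
  induction n with
  | zero =>
    intro f ψ _
    exact ⟨fun h1 _ => h1, fun h1 => h1 (fun j => j.elim0)⟩
  | succ n ih =>
    intro f ψ h
    have hval : M.val (nestImp (n+1) f ψ) x
        = limp (M.val (f (Fin.last n)) x) (M.val (nestImp n (fun i => f i.castSucc) ψ) x) := rfl
    have hb0 : 0 ≤ M.val (nestImp n (fun i => f i.castSucc) ψ) x := val_nonneg hm M _ x
    have hb1 : M.val (nestImp n (fun i => f i.castSucc) ψ) x ≤ 1 := val_le_one hm M _ x
    rcases h (Fin.last n) with h1 | h1
    · rw [hval, h1]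
      rw [show limp 1 (M.val (nestImp n (fun i => f i.castSucc) ψ) x)
          = M.val (nestImp n (fun i => f i.castSucc) ψ) x from by
        unfold limp; rw [min_eq_right (by linarith)]; ring]
      rw [ih (fun i => f i.castSucc) ψ (fun j => h j.castSucc)]
      constructor
      · intro hx hall
        exact hx fun j => hall j.castSucc
      · intro hx hall
        apply hx
        intro j
        exact Fin.lastCases (motive := fun j => M.val (f j) x = 1) h1 hall j
    · rw [hval, h1]
      rw [show limp 0 (M.val (nestImp n (fun i => f i.castSucc) ψ) x) = 1 from by
        unfold limp; rw [min_eq_left (by linarith)]]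
      constructor
      · intro _ hall
        have := hall (Fin.last n)
        rw [this] at h1
        norm_num at h1
      · intro _
        rfl

theorem thm_valid (hm : 2 ≤ m) {I : Fin m → Formula → Formula} (hI : IsIFamily m I)
    {φ : Formula} (h : Thm m I φ) :
    ∀ (W : Type) (M : Model m W) (x : W), M.val φ x = 1 := by
  induction h with
  | taut ψ σ ht =>
    intro W M x
    rw [subst_val]
    exact ht _ (fun n => val_mem hm M _ x)
  | a1 φ ψ θ =>
    intro W M x
    rw [val_imp, limp_eq_one_iff]
    rw [cond_and hm, val_and hm]
  | a2 φ ψ θ =>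
    intro W M x
    rw [val_imp, limp_eq_one_iff]
    rw [cond_and hm, val_and hm]
  | a3 φ p =>
    intro W M x
    haveI := M.ne
    rw [val_cond hm]
    have : (fun y : W => limp (M.R (fun i => {z : W | M.val φ z = tv m i}) x y)
        (M.val (.imp (.var p) (.var p)) y)) = fun _ : W => (1:ℝ) := by
      funext y
      rw [val_imp, limp_eq_one_iff.mpr le_rfl]
      exact limp_eq_one_iff.mpr (Tset_le_one hm (M.R_mem _ x y))
    rw [this, Set.range_const, csInf_singleton]
  | mp φ ψ h1 h2 ih1 ih2 =>
    intro W M x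
    have e1 := ih1 W M x
    have e2 := ih2 W M x
    rw [val_imp, e2, limp_eq_one_iff] at e1
    exact le_antisymm (val_le_one hm M ψ x) e1
  | rcea φ ψ θ h1 ih =>
    intro W M x
    have heq : ∀ y : W, M.val φ y = M.val ψ y :=
      fun y => (val_iff_one hm M φ ψ y).mp (ih W M y)
    rw [val_iff_one hm]
    rw [val_cond hm, val_cond hm]
    have : (fun i => {z : W | M.val φ z = tv m i}) = fun i => {z : W | M.val ψ z = tv m i} := by
      funext i
      ext z
      rw [Set.mem_setOf_eq, Set.mem_setOf_eq, heq z]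
    rw [this]
  | rcec φ ψ θ h1 ih =>
    intro W M x
    have heq : ∀ y : W, M.val φ y = M.val ψ y :=
      fun y => (val_iff_one hm M φ ψ y).mp (ih W M y)
    rw [val_iff_one hm]
    rw [val_cond hm, val_cond hm]
    have : (fun y : W => limp (M.R (fun i => {z : W | M.val θ z = tv m i}) x y) (M.val φ y))
        = fun y : W => limp (M.R (fun i => {z : W | M.val θ z = tv m i}) x y) (M.val ψ y) := by
      funext y
      rw [heq y]
    rw [this]
  | ra a φ γ δ hpre ihpre =>
    intro W M x
    haveI := M.ne
    rw [nestImp_val hm M x m _ _ (fun j => by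
      rw [I_val hm hI]
      split <;> simp)]
    intro hall
    rw [I_val hm hI]
    rw [if_pos]
    -- goal: tv m a ≤ M.val (.cond φ δ) x
    have hall' : ∀ j : Fin m, tv m (revIdx j) ≤ M.val (.cond φ (γ j)) x := by
      intro j
      have := hall j
      rw [I_val hm hI] at this
      by_contra hc
      rw [if_neg hc] at this
      norm_num at this
    rw [val_cond hm]
    set X : Fin m → Set W := fun i => {z : W | M.val φ z = tv m i} with hX
    have bdd : BddBelow (Set.range fun y : W => limp (M.R X x y) (M.val δ y)) :=
      ⟨0, by rintro _ ⟨y, rfl⟩;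
             exact limp_nonneg (Tset_le_one hm (M.R_mem X x y)) (val_nonneg hm M δ y)⟩
    apply le_csInf (Set.range_nonempty _)
    rintro _ ⟨y, rfl⟩
    -- get b with R X x y = tv m b
    obtain ⟨b, hb0⟩ := M.R_mem X x y
    have hb : M.R X x y = tv m b := hb0
    show tv m a ≤ limp (M.R X x y) (M.val δ y)
    have hgam : ∀ j : Fin m, tv m (odotIdx (revIdx j) b) ≤ M.val (γ j) y := by
      intro j
      have bddj : BddBelow (Set.range fun y : W => limp (M.R X x y) (M.val (γ j) y)) :=
        ⟨0, by rintro _ ⟨z, rfl⟩;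
               exact limp_nonneg (Tset_le_one hm (M.R_mem X x z)) (val_nonneg hm M (γ j) z)⟩
      have h1 : tv m (revIdx j) ≤ limp (M.R X x y) (M.val (γ j) y) := by
        refine le_trans (hall' j) ?_
        rw [val_cond hm]
        exact csInf_le bddj ⟨y, rfl⟩
      rw [hb] at h1
      rw [tv_odot hm]
      apply max_le
      · exact val_nonneg hm M (γ j) y
      · have := le_trans h1 (min_le_right _ _)
        linarith
    -- use the premise at world y for this b
    have hcon := (nestImp_val hm M y m _ _ (fun j => by
      rw [I_val hm hI]
      split <;> simp)).mp (ihpre b W M y)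
    have hdel : tv m (odotIdx a b) ≤ M.val δ y := by
      have := hcon (fun j => by
        rw [I_val hm hI, if_pos (hgam j)])
      rw [I_val hm hI] at this
      by_contra hc
      rw [if_neg hc] at this
      norm_num at this
    rw [hb]
    rw [tv_odot hm] at hdel
    have h2 : tv m a + tv m b - 1 ≤ M.val δ y := le_trans (le_max_right _ _) hdel
    unfold limp
    exact le_min (tv_le_one hm a) (by linarith)

end Sound4

/-- Soundness of LCR: if Γ ⊢_LCR φ then Γ ⊨ φ. -/
theorem soundness_LCR (m : ℕ) (hm : 2 ≤ m)
    (I : Fin m → Formula → Formula) (hI : IsIFamily m I)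
    (Γ : Set Formula) (φ : Formula)
    (h : Deriv m I Γ φ) : Entails m Γ φ := by
  induction h with
  | thm ψ ht =>
    intro W M x _
    exact thm_valid hm hI ht W M x
  | mem ψ hψ =>
    intro W M x hΓ
    exact hΓ ψ hψ
  | mp ψ χ h1 h2 ih1 ih2 =>
    intro W M x hΓ
    have e1 := ih1 W M x hΓ
    have e2 := ih2 W M x hΓ
    rw [val_imp, e2, limp_eq_one_iff] at e1
    exact le_antisymm (val_le_one hm M χ x) e1

end LCR
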